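/- Let M₁, M₂ be right type A structures over the torus algebra and t: M₁ → M₂ an A∞-isomorphism (a strict isomorphism given by maps t_i with t₁ bijective). Fix n ≥ 1 and form the shifted structures M̄₁, M̄₂ on ⊕_{j=1}^n M₁ and ⊕_{j=1}^n M₂. Then T defined by T_i((x:j), a₁,…,a_{i−1}) = (t_i(x, a₁,…,a_{i−1}) : [j+l]), with l the count of the a's lying in {ρ₃, ρ₂₃, ρ₁₂₃}, is an A∞-morphism M̄₁ → M̄₂, and it is an isomorphism when t is. -/

import Mathlib

/-- Basis elements of the torus algebra 𝒜 over ℤ/2. -/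
inductive TB : Type
  | i1 | i2 | r1 | r2 | r3 | r12 | r23 | r123
  deriving DecidableEq

instance instFintypeTB : Fintype TB :=
  ⟨{.i1, .i2, .r1, .r2, .r3, .r12, .r23, .r123}, by intro x; cases x <;> decide⟩

/-- Multiplication table on basis elements; `none` means the product is zero.
Convention: `i₁ρ₂₃ = ρ₂₃ = ρ₂₃i₁`, the only nonzero products among the ρ's are
ρ₁ρ₂ = ρ₁₂, ρ₂ρ₃ = ρ₂₃, ρ₁ρ₂₃ = ρ₁₂₃, ρ₁₂ρ₃ = ρ₁₂₃. -/
def bmul : TB → TB → Option TB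
  | .i1, .i1 => some .i1
  | .i2, .i2 => some .i2
  | .i1, .r2 => some .r2
  | .r2, .i2 => some .r2
  | .i2, .r3 => some .r3
  | .r3, .i1 => some .r3
  | .i2, .r1 => some .r1
  | .r1, .i1 => some .r1
  | .i2, .r12 => some .r12
  | .r12, .i2 => some .r12
  | .i1, .r23 => some .r23
  | .r23, .i1 => some .r23
  | .i2, .r123 => some .r123
  | .r123, .i1 => some .r123
  | .r1, .r2 => some .r12
  | .r2, .r3 => some .r23
  | .r1, .r23 => some .r123
  | .r12, .r3 => some .r123
  | _, _ => none

/-- The torus algebra as the ℤ/2-vector space of functions on the basis. -/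
abbrev TorusAlg : Type := TB → ZMod 2

/-- The basis vector (delta function) corresponding to a basis element. -/
def bas (a : TB) : TorusAlg := fun b => if b = a then 1 else 0

/-- Multiplication of the torus algebra, extended bilinearly from the table. -/
def amul (f g : TorusAlg) : TorusAlg := fun c =>
  ∑ a : TB, ∑ b : TB, (if bmul a b = some c then f a * g b else 0)

/-- The unit 1 = i₁ + i₂ of the torus algebra. -/
def aone : TorusAlg := bas .i1 + bas .i2

/-- Shift count: `l(a) = 1` for a ∈ {ρ₃, ρ₂₃, ρ₁₂₃}, `l(a) = 0` otherwise. -/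
def lB : TB → ℕ
  | .r3 => 1
  | .r23 => 1
  | .r123 => 1
  | _ => 0

/-- Total shift count of a list of algebra inputs. -/
def lL (as : List TB) : ℕ := (as.map lB).sum

/-- Merge the entries at positions i, i+1 of the list using the algebra product;
`none` if the product is zero (or the positions do not exist). -/
def splitPair (as : List TB) (i : ℕ) : Option (List TB) :=
  match as.drop i with
  | a :: b :: rest => (bmul a b).map (fun c => as.take i ++ c :: rest)
  | _ => none

/-- The A∞ (right type A) structural equations, at the level of basis inputs from 𝒜:
Σⱼ m_{k−j+1}(m_j(x,a₁,…,a_{j−1}),a_j,…,a_{k−1})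
  + Σⱼ m_{k−1}(x,a₁,…,a_j·a_{j+1},…,a_{k−1}) = 0 (over ℤ/2). -/
def ainfRel {M : Type*} [AddCommMonoid M] (m : M → List TB → M) : Prop :=
  ∀ (x : M) (as : List TB),
    (∑ j ∈ Finset.range (as.length + 1), m (m x (as.take j)) (as.drop j)) +
      (∑ i ∈ Finset.range as.length, (splitPair as i).elim 0 (fun as' => m x as')) = 0

/-- The shifted ("orbifold") operations m̄ on M̄ = ⊕_{j ∈ ℤ/n} M:
m̄((y:j), a₁,…,a_{k−1}) = (m(y,a₁,…,a_{k−1}) : j + l), where l counts the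
arguments lying in {ρ₃, ρ₂₃, ρ₁₂₃}. -/
def mbar {M : Type*} (n : ℕ) (m : M → List TB → M) (v : ZMod n → M) (as : List TB) :
    ZMod n → M :=
  fun i => m (v (i - (lL as : ZMod n))) as

/-- Type D structure equation for coefficients d : coefficient of ρ_a ⊗ x_k in δ₁(x_j):
(μ ⊗ id) ∘ (id ⊗ δ₁) ∘ δ₁ = 0. -/
def dRel {V : Type*} [Fintype V] (d : V → TB → V → ZMod 2) : Prop :=
  ∀ (j k : V) (c : TB),
    (∑ m : V, ∑ a : TB, ∑ b : TB,
      (if bmul a b = some c then d j a m * d m b k else 0)) = 0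

/-- Coefficients of the type D structure D_n: δ₁(x_j) = ρ₂₃ ⊗ x_{j+1}. -/
def dD (n : ℕ) : ZMod n → TB → ZMod n → ZMod 2 :=
  fun j a k => if a = TB.r23 ∧ k = j + 1 then 1 else 0

/-- Coefficients of the iterated maps δ_k of a type D structure:
`itD d k j as k'` is the coefficient of (ρ_{as} ⊗ x_{k'}) in δ_k(x_j),
for `as` a list of length k. -/
def itD {V : Type*} [Fintype V] [DecidableEq V] (d : V → TB → V → ZMod 2) :
    ℕ → V → List TB → V → ZMod 2
  | 0, j, as, k => if as = [] ∧ j = k then 1 else 0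
  | _ + 1, _, [], _ => 0
  | k + 1, j, a :: rest, k' => ∑ mm : V, d j a mm * itD d k mm rest k'

/-- The box tensor differential of M ⊠ D_n (cut off at length K):
δ^⊠(y ⊗ x_j) = Σ_{k} m_{k+1}(y, ρ₂₃,…,ρ₂₃) ⊗ x_{j+k}, written on ⊕_{j ∈ ℤ/n} M. -/
def boxDn {M : Type*} [AddCommMonoid M] (n K : ℕ) (m : M → List TB → M)
    (v : ZMod n → M) : ZMod n → M :=
  fun i => ∑ k ∈ Finset.range K, m (v (i - (k : ZMod n))) (List.replicate k TB.r23)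

/-- The box tensor differential of M ⊠ N for a general type D structure with
coefficients d (cut off at length K):
δ^⊠(x ⊗ y) = Σ_{k≥0} (m_{k+1} ⊗ id)(x ⊗ δ_k(y)). -/
def boxD {M V : Type*} [AddCommMonoid M] [Module (ZMod 2) M] [Fintype V] [DecidableEq V]
    (K : ℕ) (m : M → List TB → M) (d : V → TB → V → ZMod 2) (w : V → M) : V → M :=
  fun k' => ∑ k ∈ Finset.range K, ∑ j : V, ∑ as : Fin k → TB,
    itD d k j (List.ofFn as) k' • m (w j) (List.ofFn as)

/-- The A∞-morphism equations for t : M₁ → M₂ between type A structures (over ℤ/2). -/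
def ainfMor {M₁ M₂ : Type*} [AddCommMonoid M₁] [AddCommMonoid M₂]
    (m1 : M₁ → List TB → M₁) (m2 : M₂ → List TB → M₂) (t : M₁ → List TB → M₂) : Prop :=
  ∀ (x : M₁) (as : List TB),
    (∑ j ∈ Finset.range (as.length + 1), t (m1 x (as.take j)) (as.drop j)) +
      (∑ j ∈ Finset.range (as.length + 1), m2 (t x (as.take j)) (as.drop j)) +
      (∑ i ∈ Finset.range as.length, (splitPair as i).elim 0 (fun as' => t x as')) = 0

/-- The shifted morphism T between shifted structures. -/
def tbar {M₁ M₂ : Type*} (n : ℕ) (t : M₁ → List TB → M₂) (v : ZMod n → M₁)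
    (as : List TB) : ZMod n → M₂ :=
  fun i => t (v (i - (lL as : ZMod n))) as

/-- The bracket [j] ∈ {1,…,n}: [j] = n if n ∣ j, and [j] = j mod n otherwise. -/
def brk (n : ℕ) (j : ℤ) : ℤ := if (n : ℤ) ∣ j then (n : ℤ) else j % n

/-!
The shift of an output is `l` of all its algebra inputs, and `l` is additive: it adds up over
concatenation, and `l(a·b) = l(a) + l(b)` whenever `a·b ≠ 0`. Hence in every term of the
A∞-morphism equation for `T` at `((x:j), a₁, …, a_{k−1})` the inner and outer shifts add up to
the same total `l(a₁, …, a_{k−1})`, so the whole equation is the one for `t` at `x`, placed in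
summand `j + l`. In arity one `T` acts summandwise as `t₁`, hence is bijective when `t₁` is.
-/

lemma lL_append (l1 l2 : List TB) : lL (l1 ++ l2) = lL l1 + lL l2 := by
  simp [lL]

lemma lL_take_add_lL_drop (as : List TB) (j : ℕ) : lL (as.take j) + lL (as.drop j) = lL as := by
  rw [← lL_append, List.take_append_drop]

lemma lB_of_bmul_eq_some {a b c : TB} (h : bmul a b = some c) : lB c = lB a + lB b := by
  revert h; cases a <;> cases b <;> simp [bmul, lB] <;> rintro rfl <;> rfl

lemma lL_of_splitPair_eq_some {as as' : List TB} {i : ℕ} (h : splitPair as i = some as') :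
    lL as' = lL as := by
  unfold splitPair at h
  rcases hd : as.drop i with _ | ⟨a, _ | ⟨b, rest⟩⟩ <;> rw [hd] at h
  · simp at h
  · simp at h
  obtain ⟨c, hc, rfl⟩ := Option.map_eq_some_iff.mp h
  conv_rhs => rw [← List.take_append_drop i as, hd]
  simp only [lL, List.map_append, List.map_cons, List.sum_append, List.sum_cons,
    lB_of_bmul_eq_some hc]
  ring

section Shift

variable {M₁ M₂ M₃ : Type*} (n : ℕ)

lemma mbar_eq_tbar (m : M₁ → List TB → M₁) : mbar n m = tbar n m := rfl

lemma tbar_nil (t : M₁ → List TB → M₂) (v : ZMod n → M₁) :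
    tbar n t v [] = fun i => t (v i) [] := by
  funext i
  simp only [tbar, lL, List.map_nil, List.sum_nil, Nat.cast_zero, sub_zero]

lemma tbar_tbar_take_drop (f : M₂ → List TB → M₃) (g : M₁ → List TB → M₂)
    (v : ZMod n → M₁) (as : List TB) (j : ℕ) (i : ZMod n) :
    tbar n f (tbar n g v (as.take j)) (as.drop j) i =
      f (g (v (i - lL as)) (as.take j)) (as.drop j) := by
  rw [← lL_take_add_lL_drop as j]
  simp only [tbar, Nat.cast_add, sub_add_eq_sub_sub, sub_right_comm]

lemma splitPair_elim_tbar_apply [Zero M₂] (t : M₁ → List TB → M₂) (v : ZMod n → M₁)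
    (as : List TB) (k : ℕ) (i : ZMod n) :
    (splitPair as k).elim 0 (fun as' => tbar n t v as') i =
      (splitPair as k).elim 0 (fun as' => t (v (i - lL as)) as') := by
  rcases hs : splitPair as k with _ | as'
  · rfl
  · simp [tbar, lL_of_splitPair_eq_some hs]

theorem ainfMor.mbar [AddCommMonoid M₁] [AddCommMonoid M₂] {m1 : M₁ → List TB → M₁}
    {m2 : M₂ → List TB → M₂} {t : M₁ → List TB → M₂} (ht : ainfMor m1 m2 t) :
    ainfMor (mbar n m1) (mbar n m2) (tbar n t) := by
  intro v as
  funext i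
  simp only [Pi.add_apply, Finset.sum_apply, Pi.zero_apply, mbar_eq_tbar,
    tbar_tbar_take_drop, splitPair_elim_tbar_apply]
  exact ht (v (i - lL as)) as

end Shift

theorem stmt19_general {M₁ M₂ : Type*} [AddCommMonoid M₁] [AddCommMonoid M₂]
    (n : ℕ)
    (m1 : M₁ → List TB → M₁) (m2 : M₂ → List TB → M₂) (t : M₁ → List TB → M₂)
    (ht : ainfMor m1 m2 t) :
    ainfMor (mbar n m1) (mbar n m2) (tbar n t) ∧
    (Function.Bijective (fun x : M₁ => t x []) →
      Function.Bijective (fun v : ZMod n → M₁ => tbar n t v [])) := by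
  refine ⟨ht.mbar n, fun hb => ?_⟩
  simp only [tbar_nil]
  exact hb.comp_left

/-- shifting an A∞-morphism t : M₁ → M₂ by the index shift yields an
A∞-morphism T : M̄₁ → M̄₂ between the shifted structures, which is an isomorphism
when t is one. -/
theorem stmt19 {M₁ M₂ : Type*} [AddCommMonoid M₁] [AddCommMonoid M₂]
    (n : ℕ) (hn : 1 ≤ n)
    (m1 : M₁ → List TB → M₁) (m2 : M₂ → List TB → M₂) (t : M₁ → List TB → M₂)
    (h1 : ainfRel m1) (h2 : ainfRel m2) (ht : ainfMor m1 m2 t) :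
    ainfMor (mbar n m1) (mbar n m2) (tbar n t) ∧
    (Function.Bijective (fun x : M₁ => t x []) →
      Function.Bijective (fun v : ZMod n → M₁ => tbar n t v [])) :=
  stmt19_general n m1 m2 t ht
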